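/- arXiv:2603.10759 — 5 statements merged into one kernel-verified Lean document; each statement's English description precedes it below -/
import Mathlib

section
/- Let G be a group and x ∈ G such that the cyclic subgroup ⟨x⟩ is nearly normal in G (i.e. |⟨x⟩^G : ⟨x⟩| is finite). Then x is an FC-element of G. -/
/-!
The normal closure `K = ⟨x⟩^G` contains `⟨x⟩` with finite index `n`, so it is finitely generated,
and by M. Hall's lemma it has only finitely many subgroups of index `n`. All conjugates `⟨x⟩^g` are
among them, so there are finitely many. A conjugate `y = x^g` generates `⟨x⟩^g`, and a cyclic
group has only finitely many generators: all of its elements if it is finite, `y` and `y⁻¹`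
otherwise.
-/

open Subgroup

section

variable {G : Type*} [Group G]

instance MonoidHom.finite_of_fg [Group.FG G] {M : Type*} [Monoid M] [Finite M] :
    Finite (G →* M) := by
  obtain ⟨S, hS, hSfin⟩ := Group.fg_iff.1 ‹Group.FG G›
  have : Finite S := hSfin.to_subtype
  refine Finite.of_injective (fun f : G →* M => fun s : S => f s) fun f f' hff' => ?_
  exact MonoidHom.eq_of_eqOn_dense hS fun s hs => congrFun hff' ⟨s, hs⟩

theorem Subgroup.exists_eq_comap_stabilizer_of_index_eq (H : Subgroup G) {n : ℕ} (hn : n ≠ 0)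
    (hH : H.index = n) :
    ∃ (φ : G →* Equiv.Perm (Fin n)) (i : Fin n),
      H = (MulAction.stabilizer (Equiv.Perm (Fin n)) i).comap φ := by
  have : H.FiniteIndex := ⟨by omega⟩
  obtain e : G ⧸ H ≃ Fin n := Finite.equivFinOfCardEq hH
  refine ⟨(e.permCongrHom : Equiv.Perm (G ⧸ H) →* Equiv.Perm (Fin n)).comp
    (MulAction.toPermHom G (G ⧸ H)), e (1 : G), ?_⟩
  ext g
  simp [Equiv.permCongr_apply, QuotientGroup.eq]

theorem Subgroup.finite_setOf_index_eq [Group.FG G] {n : ℕ} (hn : n ≠ 0) :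
    {H : Subgroup G | H.index = n}.Finite := by
  refine (Set.finite_range fun p : (G →* Equiv.Perm (Fin n)) × Fin n =>
    (MulAction.stabilizer (Equiv.Perm (Fin n)) p.2).comap p.1).subset fun H hH => ?_
  obtain ⟨φ, i, rfl⟩ := H.exists_eq_comap_stabilizer_of_index_eq hn hH
  exact ⟨(φ, i), rfl⟩

theorem Group.fg_of_finiteIndex_of_fg (H : Subgroup G) [H.FiniteIndex] (hH : H.FG) :
    Group.FG G := by
  obtain ⟨S, hS⟩ := hH
  set T := (S : Set G) ∪ Set.range (fun q : G ⧸ H => q.out)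
  refine Group.fg_iff.2 ⟨T, eq_top_iff.2 fun g _ => ?_,
    S.finite_toSet.union (Set.finite_range _)⟩
  obtain ⟨h, hh⟩ := QuotientGroup.mk_out_eq_mul H g
  have hout : (g : G ⧸ H).out ∈ closure T :=
    subset_closure (Set.mem_union_right _ (Set.mem_range_self _))
  have hh' : (h : G) ∈ closure T := closure_mono Set.subset_union_left (hS ▸ h.2)
  simpa [hh] using mul_mem hout (inv_mem hh')

theorem Subgroup.zpowers_subgroupOf {K : Subgroup G} {x : G} (hx : x ∈ K) :
    (zpowers x).subgroupOf K = zpowers ⟨x, hx⟩ :=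
  calc (zpowers x).subgroupOf K = ((zpowers ⟨x, hx⟩).map K.subtype).comap K.subtype := by
        rw [MonoidHom.map_zpowers]; rfl
    _ = zpowers ⟨x, hx⟩ := comap_map_eq_self_of_injective K.subtype_injective _

theorem Subgroup.finite_setOf_zpowers_eq (z : G) : {y : G | zpowers y = zpowers z}.Finite := by
  by_cases hz : IsOfFinOrder z
  · have : Finite (zpowers z) := hz.finite_zpowers
    exact (zpowers z : Set G).toFinite.subset fun y hy => hy ▸ mem_zpowers y
  · refine (Set.toFinite {z, z⁻¹}).subset fun y hy => ?_
    rcases (zpowers_eq_zpowers_iff hz).1 hy.symm with rfl | rfl <;> simp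

theorem Subgroup.finite_range_map_conj {H K : Subgroup G} [K.Normal] [Group.FG K] (hHK : H ≤ K)
    [(H.subgroupOf K).FiniteIndex] :
    (Set.range fun g : G => H.map (MulAut.conj g : G →* G)).Finite := by
  have hle (g : G) : H.map (MulAut.conj g : G →* G) ≤ K :=
    (map_mono hHK).trans (Normal.map_conj_eq K g).le
  -- `L ↦ L.subgroupOf K` is injective on subgroups of `K` and preserves the index in `K`.
  refine Set.Finite.of_finite_image (f := fun L => L.subgroupOf K)
    ((finite_setOf_index_eq (FiniteIndex.index_ne_zero (H := H.subgroupOf K))).subset ?_) ?_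
  · rintro _ ⟨_, ⟨g, rfl⟩, rfl⟩
    show relIndex _ K = relIndex H K
    conv_lhs => rw [← Normal.map_conj_eq K g]
    exact relIndex_map_map_of_injective _ _ (MulAut.conj g).injective
  · rintro _ ⟨g, rfl⟩ _ ⟨g', rfl⟩ h
    have := subgroupOf_inj.1 h
    rwa [inf_of_le_left (hle g), inf_of_le_left (hle g')] at this

end

theorem nearlyNormal_cyclic_imp_FC {G : Type*} [Group G] (x : G)
    (h : ((Subgroup.zpowers x).subgroupOf
      (Subgroup.normalClosure ((Subgroup.zpowers x : Subgroup G) : Set G))).FiniteIndex) :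
    {y : G | IsConj x y}.Finite := by
  set K := normalClosure ((zpowers x : Subgroup G) : Set G)
  have hxK : zpowers x ≤ K := le_normalClosure
  have : Group.FG K := Group.fg_of_finiteIndex_of_fg ((zpowers x).subgroupOf K) <| by
    rw [zpowers_subgroupOf (hxK (mem_zpowers x)), zpowers_eq_closure]
    exact ⟨{⟨x, hxK (mem_zpowers x)⟩}, by simp⟩
  refine Set.Finite.of_finite_fibers zpowers ((finite_range_map_conj hxK).subset ?_) ?_
  · rintro _ ⟨y, hy, rfl⟩
    obtain ⟨g, rfl⟩ := isConj_iff.1 hy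
    exact ⟨g, MonoidHom.map_zpowers _ x⟩
  · rintro _ ⟨y, -, rfl⟩
    exact (finite_setOf_zpowers_eq y).subset Set.inter_subset_right
end

section
/- Let G be a group, H ≤ N_G(K), and suppose H and K are nearly normal in G. Then HK is nearly normal in G. -/
open Pointwise

/-- `H` is nearly normal in `G` if it has finite index in its normal closure. -/
def NearlyNormal {G : Type*} [Group G] (H : Subgroup G) : Prop :=
  (H.subgroupOf (Subgroup.normalClosure (H : Set G))).FiniteIndex

/-!
Write `A` and `B` for the normal closures of `H` and `K`. The normal closure of `H ⊔ K` is
`A ⊔ B`, and the chain `H ⊔ K ≤ (H ⊔ K) ⊔ A ≤ (H ⊔ K) ⊔ A ⊔ B = A ⊔ B` has finite steps: if `N` is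
normal and `M ⊇ H` with `|N : H ∩ N|` finite, then `|M ⊔ N : M| = |N : M ∩ N|` is finite too,
because every coset of `M` in `M ⊔ N = N M` has a representative in `N`.
-/

namespace Subgroup

variable {G : Type*} [Group G]

theorem relIndex_sup_left_of_le_normalizer {M N : Subgroup G}
    (hMN : M ≤ normalizer (N : Set G)) : M.relIndex (M ⊔ N) = M.relIndex N := by
  let e := quotientSubgroupOfEmbeddingOfLE M (le_sup_right : N ≤ M ⊔ N)
  have he : Function.Surjective e := by
    rintro ⟨x, hx⟩
    rw [← SetLike.mem_coe, sup_comm, coe_mul_of_right_le_normalizer_left N M hMN] at hx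
    obtain ⟨n, hn, m, hm, rfl⟩ := hx
    refine ⟨QuotientGroup.mk ⟨n, hn⟩, (QuotientGroup.eq (s := M.subgroupOf (M ⊔ N))).mpr ?_⟩
    simpa [mem_subgroupOf] using hm
  exact (Nat.card_congr (Equiv.ofBijective e ⟨e.injective, he⟩)).symm

theorem relIndex_sup_ne_zero_of_le_left {H M N : Subgroup G} [N.Normal] (hHM : H ≤ M)
    (hH : H.relIndex N ≠ 0) : M.relIndex (M ⊔ N) ≠ 0 := by
  rw [relIndex_sup_left_of_le_normalizer le_normalizer_of_normal]
  exact mt (relIndex_eq_zero_of_le_left hHM) hH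

theorem normalClosure_sup (H K : Subgroup G) :
    normalClosure ((H ⊔ K : Subgroup G) : Set G) =
      normalClosure (H : Set G) ⊔ normalClosure (K : Set G) := by
  rw [sup_eq_closure, normalClosure_closure_eq_normalClosure, normalClosure_union]

end Subgroup

open Subgroup in
/-- Near normality is normalizing join-closed: if `H ≤ N_G(K)` and both `H` and `K`
are nearly normal, then `HK = ⟨H, K⟩` is nearly normal. -/
theorem nearlyNormal_join {G : Type*} [Group G] (H K : Subgroup G)
    (hHK : H ≤ Subgroup.normalizer (K : Set G))
    (hH : NearlyNormal H) (hK : NearlyNormal K) :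
    ((H : Set G) * (K : Set G) = ((H ⊔ K : Subgroup G) : Set G)) ∧
      NearlyNormal (H ⊔ K) := by
  refine ⟨(coe_mul_of_left_le_normalizer_right H K hHK).symm, finiteIndex_iff.mpr ?_⟩
  set A := normalClosure (H : Set G)
  set B := normalClosure (K : Set G)
  have hHA : H ≤ A := le_normalClosure
  have hKB : K ≤ B := le_normalClosure
  have hclosure : (H ⊔ K) ⊔ A ⊔ B = A ⊔ B :=
    le_antisymm (sup_le (sup_le (sup_le_sup hHA hKB) le_sup_left) le_sup_right)
      (sup_le_sup_right le_sup_right B)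
  have hA : (H ⊔ K).relIndex ((H ⊔ K) ⊔ A) ≠ 0 :=
    relIndex_sup_ne_zero_of_le_left le_sup_left hH.index_ne_zero
  have hB : ((H ⊔ K) ⊔ A).relIndex ((H ⊔ K) ⊔ A ⊔ B) ≠ 0 :=
    relIndex_sup_ne_zero_of_le_left (le_sup_right.trans le_sup_left) hK.index_ne_zero
  show (H ⊔ K).relIndex (normalClosure ((H ⊔ K : Subgroup G) : Set G)) ≠ 0
  rw [normalClosure_sup, ← hclosure]
  exact relIndex_ne_zero_trans hA hB
end

section
/- In a locally nilpotent group G, a subgroup H is pronormal in G if and only if H is normal in G. -/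
/-- The conjugate subgroup `gHg⁻¹`. Thus `H^g = g⁻¹Hg` is `conjBy g⁻¹ H`. -/
def conjBy {G : Type*} [Group G] (g : G) (H : Subgroup G) : Subgroup G :=
  H.map (MulAut.conj g).toMonoidHom

/-- `H` is pronormal in `G` if for every `g`, `H` and `H^g` are conjugate by an
element of `⟨H, H^g⟩`. -/
def Pronormal {G : Type*} [Group G] (H : Subgroup G) : Prop :=
  ∀ g : G, ∃ x ∈ H ⊔ conjBy g⁻¹ H, conjBy x⁻¹ H = conjBy g⁻¹ H

/-!
If `H` is pronormal, every `g` yields some `x ∈ ⟨H, H^x⟩` with `H^x = H^g`, so it suffices to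
show that `x ∈ ⟨A, A^x⟩` forces `x ∈ A`. In a nilpotent group this goes by induction on the
class: modulo the centre `x` agrees with some `a ∈ A`, and the central factor `a⁻¹x` does not
move `A`, so `A^x = A^a = A`. A locally nilpotent group reduces to this case, since
`x ∈ ⟨H, H^x⟩` is already witnessed inside the finitely generated, hence nilpotent, subgroup
generated by `x` and finitely many elements of `H ∪ H^x`.
-/

open Subgroup

section conjBy

variable {G : Type*} [Group G]

lemma mem_conjBy {g x : G} {A : Subgroup G} : x ∈ conjBy g A ↔ g⁻¹ * x * g ∈ A := by
  constructor
  · rintro ⟨a, ha, rfl⟩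
    simpa [mul_assoc] using ha
  · exact fun h => ⟨g⁻¹ * x * g, h, by simp [mul_assoc]⟩

lemma map_conjBy {G' : Type*} [Group G'] (f : G →* G') (g : G) (A : Subgroup G) :
    (conjBy g A).map f = conjBy (f g) (A.map f) := by
  simp only [conjBy, map_map]
  congr 1
  ext a
  simp

lemma conjBy_mul (g h : G) (A : Subgroup G) : conjBy (g * h) A = conjBy g (conjBy h A) := by
  ext x
  simp only [mem_conjBy, mul_inv_rev, mul_assoc]

lemma conjBy_eq_self_of_mem {a : G} {A : Subgroup G} (ha : a ∈ A) : conjBy a A = A := by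
  ext x
  rw [mem_conjBy]
  exact ⟨fun h => by simpa [mul_assoc] using A.mul_mem (A.mul_mem ha h) (A.inv_mem ha),
    fun h => A.mul_mem (A.mul_mem (A.inv_mem ha) h) ha⟩

lemma conjBy_eq_self_of_mem_center {z : G} (hz : z ∈ center G) (A : Subgroup G) :
    conjBy z A = A := by
  ext x
  rw [mem_conjBy, mul_assoc, mem_center_iff.mp hz x, inv_mul_cancel_left]

lemma normal_iff_forall_conjBy_eq {A : Subgroup G} : A.Normal ↔ ∀ g : G, conjBy g A = A :=
  normal_iff_map_conj_eq

end conjBy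

theorem Subgroup.exists_finite_subset_of_mem_closure {G : Type*} [Group G] {S : Set G} {x : G}
    (hx : x ∈ closure S) : ∃ T ⊆ S, T.Finite ∧ x ∈ closure T := by
  induction hx using closure_induction with
  | mem y hy => exact ⟨{y}, Set.singleton_subset_iff.mpr hy, Set.finite_singleton y,
      subset_closure rfl⟩
  | one => exact ⟨∅, Set.empty_subset S, Set.finite_empty, one_mem _⟩
  | mul y z _ _ hy hz =>
    obtain ⟨T, hTS, hT, hyT⟩ := hy
    obtain ⟨U, hUS, hU, hzU⟩ := hz
    exact ⟨T ∪ U, Set.union_subset hTS hUS, hT.union hU,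
      mul_mem (closure_mono Set.subset_union_left hyT) (closure_mono Set.subset_union_right hzU)⟩
  | inv y _ hy =>
    obtain ⟨T, hTS, hT, hyT⟩ := hy
    exact ⟨T, hTS, hT, inv_mem hyT⟩

theorem mem_of_mem_sup_conjBy_inv {F : Type*} [Group F] [Group.IsNilpotent F] {A : Subgroup F}
    {x : F} (hx : x ∈ A ⊔ conjBy x⁻¹ A) : x ∈ A := by
  refine Group.nilpotent_center_quotient_ind
    (P := fun F _ _ => ∀ (A : Subgroup F) (x : F), x ∈ A ⊔ conjBy x⁻¹ A → x ∈ A)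
    F ?_ ?_ A x hx
  · intro F _ _ A x _
    rw [Subsingleton.elim x 1]
    exact A.one_mem
  · intro F _ _ ih A x hx
    let π := QuotientGroup.mk' (center F)
    obtain ⟨a, ha, hπa⟩ := ih (A.map π) (π x) <| by
      simpa only [Subgroup.map_sup, map_conjBy, map_inv] using mem_map_of_mem π hx
    have hcentral : a⁻¹ * x ∈ center F := by
      rw [← QuotientGroup.ker_mk' (center F), MonoidHom.mem_ker, map_mul, map_inv, hπa,
        inv_mul_cancel]
    have hconj : conjBy x⁻¹ A = A := by
      rw [show x⁻¹ = (a⁻¹ * x)⁻¹ * a⁻¹ by group, conjBy_mul,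
        conjBy_eq_self_of_mem (A.inv_mem ha), conjBy_eq_self_of_mem_center (inv_mem hcentral)]
    rwa [hconj, sup_idem] at hx

theorem mem_of_mem_sup_conjBy_inv_of_le {G : Type*} [Group G] {F A : Subgroup G}
    [Group.IsNilpotent F] (hAF : A ≤ F) {x : G} (hxF : x ∈ F)
    (hx : x ∈ A ⊔ conjBy x⁻¹ A) : x ∈ A := by
  let A' := A.subgroupOf F
  have hA' : A'.map F.subtype = A := by
    rw [subgroupOf_map_subtype, inf_eq_left.mpr hAF]
  have hx' : (⟨x, hxF⟩ : F) ∈ A' ⊔ conjBy (⟨x, hxF⟩ : F)⁻¹ A' := by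
    rwa [← mem_map_iff_mem F.subtype_injective, Subgroup.map_sup, map_conjBy, hA']
  exact mem_subgroupOf.mp (mem_of_mem_sup_conjBy_inv hx')

theorem mem_of_mem_sup_conjBy_inv_of_locallyNilpotent {G : Type*} [Group G]
    (hG : ∀ K : Subgroup G, K.FG → Group.IsNilpotent K) {H : Subgroup G} {x : G}
    (hx : x ∈ H ⊔ conjBy x⁻¹ H) : x ∈ H := by
  rw [sup_eq_closure] at hx
  obtain ⟨T, hTS, hT, hxT⟩ := exists_finite_subset_of_mem_closure hx
  let F := closure (insert x T)
  have := hG F ((fg_iff F).mpr ⟨_, rfl, hT.insert x⟩)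
  have hxF : x ∈ F := subset_closure (Set.mem_insert x T)
  have hTF : T ⊆ F := (Set.subset_insert x T).trans subset_closure
  suffices x ∈ H ⊓ F from this.1
  refine mem_of_mem_sup_conjBy_inv_of_le inf_le_right hxF
    ((closure_le _).mpr (fun y hy => ?_) hxT)
  rcases hTS hy with hyH | hyHx
  · exact mem_sup_left ⟨hyH, hTF hy⟩
  · have hxyH : x * y * x⁻¹ ∈ H := by simpa only [inv_inv] using mem_conjBy.mp hyHx
    have hxyF : x * y * x⁻¹ ∈ F := mul_mem (mul_mem hxF (hTF hy)) (inv_mem hxF)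
    exact mem_sup_right (mem_conjBy.mpr (by rw [inv_inv]; exact ⟨hxyH, hxyF⟩))

theorem Pronormal.normal_of_locallyNilpotent {G : Type*} [Group G]
    (hG : ∀ K : Subgroup G, K.FG → Group.IsNilpotent K) {H : Subgroup G} (hH : Pronormal H) :
    H.Normal := by
  have hconj : ∀ g : G, conjBy g⁻¹ H = H := fun g => by
    obtain ⟨x, hx, hxg⟩ := hH g
    rw [← hxg] at hx ⊢
    have hxH : x ∈ H := mem_of_mem_sup_conjBy_inv_of_locallyNilpotent hG hx
    exact conjBy_eq_self_of_mem (H.inv_mem hxH)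
  exact normal_iff_forall_conjBy_eq.mpr fun g => by simpa only [inv_inv] using hconj g⁻¹

theorem Subgroup.Normal.pronormal {G : Type*} [Group G] {H : Subgroup G} (hH : H.Normal) :
    Pronormal H :=
  fun _ => ⟨1, one_mem _, by simp only [normal_iff_forall_conjBy_eq.mp hH]⟩

/-- In a locally nilpotent group, pronormality coincides with normality. -/
theorem pronormal_iff_normal_of_locallyNilpotent {G : Type*} [Group G]
    (hG : ∀ H : Subgroup G, H.FG → Group.IsNilpotent H) (H : Subgroup G) :
    Pronormal H ↔ H.Normal :=
  ⟨Pronormal.normal_of_locallyNilpotent hG, Subgroup.Normal.pronormal⟩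
end

section
/- Let K be a finite field of order q² with q a power of a prime, and consider the group U of upper unitriangular 3×3 matrices M over K satisfying the unitary condition (with respect to the involution x ↦ x^q). Suppose q is even. Choose b, s, t ∈ K with b + b^q = 1, t + t^q = s^{q+1}, and s + s^q ∉ {0, 1}. Let g be the unitriangular matrix with superdiagonal entries (1, 1) and corner entry b, and let h be the unitriangular matrix with superdiagonal entries (s, s^q) and corner entry t. Then g has order 4 and h does not normalize ⟨g⟩. -/
/-!
Both `g` and `h` lie in the Heisenberg-type group of matrices `[[1, a, c], [0, 1, d], [0, 0, 1]]`,
where `(a, c, d) * (a', c', d') = (a + a', c + c' + a d', d + d')`, so the powers of `g` are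
`g ^ k = (k, k b + C(k, 2), k)`. In characteristic `2` this gives `g ^ 2 = (0, 1, 0)` and
`g ^ 4 = 1`. Comparing the entries of `g h` and `h g ^ k` shows `k ≡ 1` and
`s ^ q - s = C(k, 2)`; but in characteristic `2` every natural number is `0` or `1`.
-/

section

variable {R : Type*} [CommRing R]

def heisenbergMatrix (a c d : R) : Matrix (Fin 3) (Fin 3) R :=
  !![1, a, c; 0, 1, d; 0, 0, 1]

theorem heisenbergMatrix_zero : heisenbergMatrix (0 : R) 0 0 = 1 := by
  ext i j
  fin_cases i <;> fin_cases j <;> rfl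

theorem heisenbergMatrix_inj {a c d a' c' d' : R} :
    heisenbergMatrix a c d = heisenbergMatrix a' c' d' ↔ a = a' ∧ c = c' ∧ d = d' := by
  constructor
  · intro h
    exact ⟨congrFun (congrFun h 0) 1, congrFun (congrFun h 0) 2, congrFun (congrFun h 1) 2⟩
  · rintro ⟨rfl, rfl, rfl⟩
    rfl

theorem heisenbergMatrix_mul (a c d a' c' d' : R) :
    heisenbergMatrix a c d * heisenbergMatrix a' c' d' =
      heisenbergMatrix (a + a') (c + c' + a * d') (d + d') := by
  ext i j
  fin_cases i <;> fin_cases j <;>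
    simp [heisenbergMatrix, Matrix.mul_apply, Fin.sum_univ_three] <;> ring

theorem heisenbergMatrix_pow (a c d : R) (n : ℕ) :
    heisenbergMatrix a c d ^ n =
      heisenbergMatrix (n * a) (n * c + n.choose 2 * (a * d)) (n * d) := by
  induction n with
  | zero => simpa using (heisenbergMatrix_zero (R := R)).symm
  | succ n ih =>
    rw [pow_succ, ih, heisenbergMatrix_mul, Nat.choose_succ_succ, Nat.choose_one_right]
    congr 1 <;> push_cast <;> ring

theorem orderOf_heisenbergMatrix_of_charTwo [CharP R 2] {a c d : R} (had : a * d ≠ 0) :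
    orderOf (heisenbergMatrix a c d) = 4 := by
  have hsq : heisenbergMatrix a c d ^ 2 = heisenbergMatrix 0 (a * d) 0 := by
    rw [heisenbergMatrix_pow, heisenbergMatrix_inj]
    simp [CharTwo.two_eq_zero]
  refine orderOf_eq_prime_pow (p := 2) (n := 1) ?_ ?_
  · rw [pow_one, hsq, ← heisenbergMatrix_zero, heisenbergMatrix_inj]
    simpa using had
  · rw [pow_succ, pow_one, pow_mul, hsq, heisenbergMatrix_pow, ← heisenbergMatrix_zero,
      heisenbergMatrix_inj]
    simp [CharTwo.two_eq_zero]

theorem sub_eq_choose_of_mul_eq_mul_pow {b s t u : R} {k : ℕ}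
    (h : heisenbergMatrix 1 b 1 * heisenbergMatrix s t u =
      heisenbergMatrix s t u * heisenbergMatrix 1 b 1 ^ k) :
    u - s = k.choose 2 := by
  rw [heisenbergMatrix_pow, heisenbergMatrix_mul, heisenbergMatrix_mul, heisenbergMatrix_inj]
    at h
  obtain ⟨h01, h02, -⟩ := h
  have hk : (k : R) = 1 := by linear_combination -h01
  linear_combination h02 + (b + s) * hk

end

theorem unitary_not_dedekind_general (q : ℕ)
    (hq2 : 2 ∣ q) (K : Type*) [Field K] [Fintype K] (hcard : Fintype.card K = q ^ 2)
    (b s t : K)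
    (hs0 : s + s ^ q ≠ 0) (hs1 : s + s ^ q ≠ 1) :
    orderOf (!![1, 1, b; 0, 1, 1; 0, 0, 1] : Matrix (Fin 3) (Fin 3) K) = 4 ∧
      ∀ k : ℕ,
        (!![1, 1, b; 0, 1, 1; 0, 0, 1] : Matrix (Fin 3) (Fin 3) K) *
            !![1, s, t; 0, 1, s ^ q; 0, 0, 1] ≠
          !![1, s, t; 0, 1, s ^ q; 0, 0, 1] *
            (!![1, 1, b; 0, 1, 1; 0, 0, 1] : Matrix (Fin 3) (Fin 3) K) ^ k := by
  have : CharP K 2 := ringChar.of_eq <| FiniteField.even_card_iff_char_two.mpr <|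
    Nat.mod_eq_zero_of_dvd (hcard ▸ dvd_pow hq2 two_ne_zero)
  refine ⟨orderOf_heisenbergMatrix_of_charTwo (by simp), fun k h => ?_⟩
  have hchoose := sub_eq_choose_of_mul_eq_mul_pow h
  rw [CharTwo.sub_eq_add, add_comm] at hchoose
  rcases CharTwo.natCast_cases (R := K) (k.choose 2) with h0 | h1
  exacts [hs0 (hchoose.trans h0), hs1 (hchoose.trans h1)]

/-- In the unitriangular 'unitary' group over `GF(q²)` with `q` even, the element `g`
has order `4` and `h` does not normalize `⟨g⟩`. -/
theorem unitary_not_dedekind (q : ℕ) (hq : ∃ p k : ℕ, p.Prime ∧ 0 < k ∧ q = p ^ k)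
    (hq2 : 2 ∣ q) (K : Type*) [Field K] [Fintype K] (hcard : Fintype.card K = q ^ 2)
    (b s t : K) (hb : b + b ^ q = 1) (ht : t + t ^ q = s ^ (q + 1))
    (hs0 : s + s ^ q ≠ 0) (hs1 : s + s ^ q ≠ 1) :
    orderOf (!![1, 1, b; 0, 1, 1; 0, 0, 1] : Matrix (Fin 3) (Fin 3) K) = 4 ∧
      ∀ k : ℕ,
        (!![1, 1, b; 0, 1, 1; 0, 0, 1] : Matrix (Fin 3) (Fin 3) K) *
            !![1, s, t; 0, 1, s ^ q; 0, 0, 1] ≠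
          !![1, s, t; 0, 1, s ^ q; 0, 0, 1] *
            (!![1, 1, b; 0, 1, 1; 0, 0, 1] : Matrix (Fin 3) (Fin 3) K) ^ k :=
  unitary_not_dedekind_general q hq2 K hcard b s t hs0 hs1
end

section
/- Let G be a group, F a finite subgroup of the FC-centre of G. Then the normal closure F^G is finite (Dietzmann's Lemma). -/
/-!
The normal closure of `F` is `K = ⟨X⟩`, where `X` is the finite set of conjugates of elements of
`F`; its elements have finite order and finitely many conjugates. The centralizer of `X` is a
finite intersection of centralizers of finite index and it centralizes `K`, so `Z(K)` has finite
index in `K`. Hence `K` has only finitely many commutators, `[K, K]` is finite by Schur's theorem,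
and `K / [K, K]` is a finitely generated abelian group generated by elements of finite order, so
it is finite too.
-/

open scoped commutatorElement

theorem CommGroup.isMulTorsion_of_closure_eq_top {A : Type*} [CommGroup A] {s : Set A}
    (hs : Subgroup.closure s = ⊤) (htor : ∀ a ∈ s, IsOfFinOrder a) : IsMulTorsion A :=
  fun a => (Subgroup.closure_le (CommGroup.torsion A)).2 htor (hs ▸ Subgroup.mem_top a)

theorem Group.finite_of_finite_commutator {G : Type*} [Group G] [Finite (commutator G)]
    {s : Set G} (hs : s.Finite) (hgen : Subgroup.closure s = ⊤)
    (htor : ∀ g ∈ s, IsOfFinOrder g) : Finite G := by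
  have : Group.FG G := Group.fg_iff.2 ⟨s, hgen, hs⟩
  have hof : Function.Surjective (Abelianization.of : G →* Abelianization G) :=
    QuotientGroup.mk'_surjective _
  have : Group.FG (Abelianization G) := Group.fg_of_surjective hof
  have : Finite (G ⧸ commutator G) := by
    refine CommGroup.finite_of_fg_isMulTorsion (Abelianization G) <|
      CommGroup.isMulTorsion_of_closure_eq_top (s := Abelianization.of '' s) ?_ ?_
    · rw [← MonoidHom.map_closure, hgen, ← MonoidHom.range_eq_map]
      exact MonoidHom.range_eq_top.2 hof
    · rintro - ⟨g, hg, rfl⟩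
      exact Abelianization.of.isOfFinOrder (htor g hg)
  exact Finite.of_subgroup_quotient (commutator G)

namespace Subgroup

variable {G : Type*} [Group G]

theorem index_centralizer_singleton (g : G) :
    (centralizer {g}).index = {h : G | IsConj g h}.ncard := by
  have : (centralizer {g}).index = (MulAction.stabilizer (ConjAct G) g).index :=
    (congrArg index (centralizer_eq_comap_stabilizer g)).trans
      (index_comap_of_surjective _ ConjAct.toConjAct.surjective)
  rw [this, MulAction.index_stabilizer]
  congr 1
  ext h
  rw [Set.mem_ofPred_eq, ConjAct.mem_orbit_conjAct, isConj_comm]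

theorem finiteIndex_centralizer_singleton {g : G} (hg : {h : G | IsConj g h}.Finite) :
    (centralizer {g}).FiniteIndex :=
  ⟨by rw [index_centralizer_singleton]; exact ((Set.ncard_pos hg).2 ⟨g, IsConj.refl g⟩).ne'⟩

theorem finiteIndex_centralizer {s : Set G} (hs : s.Finite)
    (hfc : ∀ g ∈ s, {h : G | IsConj g h}.Finite) : (centralizer s).FiniteIndex := by
  have : Finite s := hs.to_subtype
  rw [centralizer_eq_iInf, iInf_subtype']
  exact finiteIndex_iInf fun g => finiteIndex_centralizer_singleton (hfc g g.2)

theorem finiteIndex_center_closure {s : Set G} (hs : s.Finite)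
    (hfc : ∀ g ∈ s, {h : G | IsConj g h}.Finite) : (center (closure s)).FiniteIndex := by
  have := finiteIndex_centralizer hs hfc
  refine finiteIndex_of_le (H := (centralizer s).subgroupOf (closure s)) ?_
  intro g hg
  rw [mem_subgroupOf, ← centralizer_closure] at hg
  exact mem_center_iff.2 fun k => Subtype.ext (mem_centralizer_iff.1 hg k k.2)

theorem commutatorElement_mul_mul_of_mem_center (a b : G) {z w : G} (hz : z ∈ center G)
    (hw : w ∈ center G) : ⁅a * z, b * w⁆ = ⁅a, b⁆ := by
  have hz' := mem_center_iff.1 hz (b * w)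
  have hw' := mem_center_iff.1 hw a⁻¹
  calc ⁅a * z, b * w⁆ = a * (z * (b * w)) * z⁻¹ * a⁻¹ * w⁻¹ * b⁻¹ := by
        simp only [commutatorElement_def, mul_inv_rev, mul_assoc]
    _ = a * b * (w * a⁻¹) * w⁻¹ * b⁻¹ := by rw [← hz']; group
    _ = ⁅a, b⁆ := by rw [← hw', commutatorElement_def]; group

theorem finite_commutatorSet_of_finiteIndex_center [(center G).FiniteIndex] :
    Finite (commutatorSet G) := by
  have : Finite (G ⧸ center G) := finite_quotient_of_finiteIndex
  refine Set.Finite.to_subtype <| (Set.finite_range fun p : (G ⧸ center G) × (G ⧸ center G) =>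
    ⁅p.1.out, p.2.out⁆).subset ?_
  rintro - ⟨a, b, rfl⟩
  obtain ⟨z, hz⟩ := QuotientGroup.mk_out_eq_mul (center G) a
  obtain ⟨w, hw⟩ := QuotientGroup.mk_out_eq_mul (center G) b
  exact ⟨((a : G ⧸ center G), (b : G ⧸ center G)), by
    simp only [hz, hw, commutatorElement_mul_mul_of_mem_center a b z.2 w.2]⟩

theorem finite_closure_of_finite_conj {s : Set G} (hs : s.Finite)
    (hfc : ∀ g ∈ s, {h : G | IsConj g h}.Finite) (htor : ∀ g ∈ s, IsOfFinOrder g) :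
    Finite (closure s) := by
  have := finiteIndex_center_closure hs hfc
  have := finite_commutatorSet_of_finiteIndex_center (G := closure s)
  exact Group.finite_of_finite_commutator (hs.preimage (closure s).subtype_injective.injOn)
    (closure_preimage_eq_top s)
    fun g hg => (closure s).subtype_injective.isOfFinOrder_iff.1 (htor g hg)

end Subgroup

/-- Dietzmann's Lemma: the normal closure of a finite subgroup of the FC-centre is finite. -/
theorem dietzmann {G : Type*} [Group G] (F : Subgroup G) (hfin : (F : Set G).Finite)
    (hFC : ∀ x ∈ F, {y : G | IsConj x y}.Finite) :
    ((Subgroup.normalClosure (F : Set G) : Subgroup G) : Set G).Finite := by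
  have : Finite F := hfin.to_subtype
  have hfc : ∀ x ∈ Group.conjugatesOfSet (F : Set G), {y : G | IsConj x y}.Finite := by
    intro x hx
    obtain ⟨a, ha, hax⟩ := Group.mem_conjugatesOfSet_iff.1 hx
    exact (hFC a ha).subset fun y hy => hax.trans hy
  have htor : ∀ x ∈ Group.conjugatesOfSet (F : Set G), IsOfFinOrder x := by
    intro x hx
    obtain ⟨a, ha, hax⟩ := Group.mem_conjugatesOfSet_iff.1 hx
    exact hax.isOfFinOrder
      (F.subtype_injective.isOfFinOrder_iff.2 (isOfFinOrder_of_finite (⟨a, ha⟩ : F)))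
  exact Set.finite_coe_iff.1
    (Subgroup.finite_closure_of_finite_conj (hfin.biUnion hFC) hfc htor)
end
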